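/- The total number of corners over all tree-like tableaux of size n equals the total number of corners over all permutation tableaux of size n plus (n−1)!. -/

import Mathlib

open scoped BigOperators
open Nat

/-- The `t`-th border edge (1-indexed, read from northeast to southwest) of a Ferrers
shape with `cols` columns (rows given by the Young diagram `D`, possibly together with
extra empty rows) is a south step.  The south step belonging to row `i` occurs at
position `i + 1 + (cols - rowLen i)`. -/
def IsSouth (D : YoungDiagram) (cols t : ℕ) : Prop :=
  ∃ i, t = i + 1 + (cols - D.rowLen i)

/-- Corners of a Ferrers diagram: cells whose right and bottom edges are both border
edges. -/
noncomputable def cornerCount (D : YoungDiagram) : ℕ :=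
  {c : ℕ × ℕ | c ∈ D ∧ (c.1 + 1, c.2) ∉ D ∧ (c.1, c.2 + 1) ∉ D}.ncard

/-- A permutation tableau of size `n`: a Ferrers diagram of half-perimeter `n`
(`rows` rows, possibly empty, with the nonempty rows forming the Young diagram
`shape`) filled with `0`s and `1`s (`filling c = true` means the cell `c` contains
a `1`), such that every column contains at least one `1` and no `0` has a `1` above
it in its column and simultaneously a `1` to its left in its row. -/
structure PermTableau (n : ℕ) where
  shape : YoungDiagram
  rows : ℕ
  rows_pos : 0 < rows
  rows_ge : shape.colLen 0 ≤ rows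
  half : rows + shape.rowLen 0 = n
  filling : ℕ × ℕ → Bool
  support : ∀ c : ℕ × ℕ, c ∉ shape → filling c = false
  col_one : ∀ j < shape.rowLen 0, ∃ i, filling (i, j) = true
  avoid : ∀ i j : ℕ, (i, j) ∈ shape → filling (i, j) = false →
      (∃ i' < i, filling (i', j) = true) → ∀ j' < j, filling (i, j') = false

/-- The `t`-th border edge of a permutation tableau is a south step. -/
def PermTableau.south {n : ℕ} (T : PermTableau n) (t : ℕ) : Prop :=
  IsSouth T.shape (T.shape.rowLen 0) t

/-- Row `i` of a permutation tableau is unrestricted: it contains no restricted `0`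
(a `0` with a `1` above it in its column). -/
def PermTableau.unres {n : ℕ} (T : PermTableau n) (i : ℕ) : Prop :=
  ∀ j, (i, j) ∈ T.shape → T.filling (i, j) = false → ∀ i' < i, T.filling (i', j) = false

/-- The number of unrestricted rows of a permutation tableau. -/
noncomputable def PermTableau.U {n : ℕ} (T : PermTableau n) : ℕ :=
  {i | i < T.rows ∧ T.unres i}.ncard

/-- A tree-like tableau of size `n`: a Ferrers diagram of half-perimeter `n + 1`
with pointed cells such that the top-left cell is pointed (the root point), every
row and every column contains a pointed cell, for every pointed cell all the cells
above it are empty or all the cells to its left are empty, and every non-root point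
has a point above it or to its left (so that the points form a tree rooted at the
root point). -/
structure TreeLike (n : ℕ) where
  shape : YoungDiagram
  half : shape.colLen 0 + shape.rowLen 0 = n + 1
  point : ℕ × ℕ → Bool
  support : ∀ c : ℕ × ℕ, c ∉ shape → point c = false
  root : point (0, 0) = true
  row_point : ∀ i < shape.colLen 0, ∃ j, point (i, j) = true
  col_point : ∀ j < shape.rowLen 0, ∃ i, point (i, j) = true
  cond : ∀ i j : ℕ, point (i, j) = true →
      (∀ i' < i, point (i', j) = false) ∨ (∀ j' < j, point (i, j') = false)
  conn : ∀ i j : ℕ, point (i, j) = true → (i, j) ≠ (0, 0) →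
      (∃ i' < i, point (i', j) = true) ∨ (∃ j' < j, point (i, j') = true)

/-- The `t`-th border edge of a tree-like tableau is a south step (there are `n + 1`
border edges). -/
def TreeLike.south {n : ℕ} (T : TreeLike n) (t : ℕ) : Prop :=
  IsSouth T.shape (T.shape.rowLen 0) t

/-- A symmetric tree-like tableau of size `2 * n + 1`: a tree-like tableau invariant
under reflection about the main diagonal. -/
structure SymTreeLike (n : ℕ) extends TreeLike (2 * n + 1) where
  sym_shape : toTreeLike.shape.transpose = toTreeLike.shape
  sym_point : ∀ i j : ℕ, toTreeLike.point (i, j) = toTreeLike.point (j, i)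

/-- Cells of a shifted Ferrers diagram with `k` columns: on top a staircase of `k`
added rows, row `i` (for `i < k`) having the `i + 1` cells in columns `0, …, i`
with rightmost (diagonal) cell `(i, i)`, and below it the rows of the Ferrers
diagram `D` (row `k + i` of the shifted diagram is row `i` of `D`). -/
def BCell (k : ℕ) (D : YoungDiagram) (c : ℕ × ℕ) : Prop :=
  (c.1 < k ∧ c.2 ≤ c.1) ∨ (k ≤ c.1 ∧ (c.1 - k, c.2) ∈ D)

/-- A type-B permutation tableau of size `n`: a shifted Ferrers diagram of
half-perimeter `n` (`cols` columns and `n - cols` lower rows, possibly empty, the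
nonempty ones forming the Young diagram `shape`) filled with `0`s and `1`s such
that every column contains at least one `1`, no `0` has a `1` above it in its
column and simultaneously a `1` on its side in its row, and every row whose
diagonal cell contains a `0` is entirely filled with `0`s. -/
structure BTableau (n : ℕ) where
  cols : ℕ
  cols_le : cols ≤ n
  shape : YoungDiagram
  rows_ge : shape.colLen 0 ≤ n - cols
  width_le : shape.rowLen 0 ≤ cols
  filling : ℕ × ℕ → Bool
  support : ∀ c : ℕ × ℕ, ¬ BCell cols shape c → filling c = false
  col_one : ∀ j < cols, ∃ i, filling (i, j) = true
  avoid : ∀ i j : ℕ, BCell cols shape (i, j) → filling (i, j) = false →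
      (∃ i' < i, filling (i', j) = true) → ∀ j' < j, filling (i, j') = false
  diag : ∀ i < cols, filling (i, i) = false → ∀ j, filling (i, j) = false

/-- The `t`-th border edge of a type-B permutation tableau is a south step (there
are `n` border edges, those of the underlying, unshifted, Ferrers diagram). -/
def BTableau.south {n : ℕ} (B : BTableau n) (t : ℕ) : Prop :=
  IsSouth B.shape B.cols t

/-- Row `i` (among the `n` rows of the shifted diagram) of a type-B permutation
tableau is unrestricted: it contains no restricted `0` and no diagonal `0`. -/
def BTableau.unres {n : ℕ} (B : BTableau n) (i : ℕ) : Prop :=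
  (i < B.cols → B.filling (i, i) = true) ∧
  ∀ j, BCell B.cols B.shape (i, j) → B.filling (i, j) = false →
    ∀ i' < i, B.filling (i', j) = false

/-- The number of unrestricted rows of a type-B permutation tableau. -/
noncomputable def BTableau.U {n : ℕ} (B : BTableau n) : ℕ :=
  {i | i < n ∧ B.unres i}.ncard

/-- The number of corners of a type-B permutation tableau: occurrences of a south
border step immediately followed by a west border step. -/
noncomputable def BTableau.corners {n : ℕ} (B : BTableau n) : ℕ :=
  {k | 1 ≤ k ∧ k + 1 ≤ n ∧ B.south k ∧ ¬ B.south (k + 1)}.ncard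

/-!
Deleting the first column of a tree-like tableau and recording the topmost point of every other
column and the leftmost point of every row gives exactly the data that determine a permutation
tableau: the topmost `1` of every column and the rightmost restricted `0` of every row
(`TableauCode`). So the tree-like shape is the permutation-tableau shape with a first column
prepended along all its rows, empty ones included. This adds one corner exactly when the bottom
row of the permutation tableau is empty, i.e. when its last border edge is a south step.

Deleting that empty row shows that there are as many such tableaux of size `m + 1` as tableaux of
size `m`, namely `m !`. The count comes from the generating function of tableaux by number `U` of
unrestricted rows: splitting on the last border edge (empty last row, or full first column)
gives `∑ x ^ U = x (x + 1) ⋯ (x + m - 1)` for tableaux of size `m`.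
-/

open Finset

namespace YoungDiagram

def ofRowLen (f : ℕ → ℕ) (hf : ∀ i, f (i + 1) ≤ f i) (N : ℕ)
    (hN : ∀ i, N ≤ i → f i = 0) : YoungDiagram where
  cells := (range N ×ˢ range (f 0)).filter fun c => c.2 < f c.1
  isLowerSet := by
    rintro ⟨i₁, j₁⟩ ⟨i₂, j₂⟩ ⟨hi, hj⟩ h
    simp only [coe_filter, mem_product, mem_range, Set.mem_ofPred_eq] at h hi hj ⊢
    have := antitone_nat_of_succ_le hf hi
    have := antitone_nat_of_succ_le hf (Nat.zero_le i₂)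
    have : ¬ N ≤ i₂ := fun h' => by have := hN i₂ h'; omega
    omega

theorem mem_ofRowLen {f : ℕ → ℕ} {hf N hN} {c : ℕ × ℕ} :
    c ∈ ofRowLen f hf N hN ↔ c.2 < f c.1 := by
  rw [← mem_cells]
  simp only [ofRowLen, mem_filter, mem_product, mem_range, and_iff_right_iff_imp]
  intro h
  have : ¬ N ≤ c.1 := fun h' => by have := hN c.1 h'; omega
  exact ⟨by omega, h.trans_le (antitone_nat_of_succ_le hf (Nat.zero_le _))⟩

theorem rowLen_eq_of_forall_mem_iff {μ : YoungDiagram} {i m : ℕ}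
    (h : ∀ j, (i, j) ∈ μ ↔ j < m) : μ.rowLen i = m := by
  simp only [mem_iff_lt_rowLen] at h
  exact eq_of_forall_lt_iff h

theorem colLen_eq_of_forall_mem_iff {μ : YoungDiagram} {j m : ℕ}
    (h : ∀ i, (i, j) ∈ μ ↔ i < m) : μ.colLen j = m := by
  simp only [mem_iff_lt_colLen] at h
  exact eq_of_forall_lt_iff h

theorem rowLen_ofRowLen {f : ℕ → ℕ} {hf N hN} (i : ℕ) :
    (ofRowLen f hf N hN).rowLen i = f i :=
  rowLen_eq_of_forall_mem_iff fun _ => mem_ofRowLen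

theorem rowLen_eq_zero {μ : YoungDiagram} {i : ℕ} (h : μ.colLen 0 ≤ i) : μ.rowLen i = 0 := by
  by_contra h'
  have := mem_iff_lt_colLen.1 (mem_iff_lt_rowLen.2 (Nat.pos_of_ne_zero h'))
  omega

theorem lt_colLen_zero {μ : YoungDiagram} {i j : ℕ} (h : (i, j) ∈ μ) : i < μ.colLen 0 :=
  (mem_iff_lt_colLen.1 h).trans_le (μ.colLen_anti 0 j (Nat.zero_le _))

theorem lt_rowLen_zero {μ : YoungDiagram} {i j : ℕ} (h : (i, j) ∈ μ) : j < μ.rowLen 0 :=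
  (mem_iff_lt_rowLen.1 h).trans_le (μ.rowLen_anti 0 i (Nat.zero_le _))

theorem rowLen_bot (i : ℕ) : (⊥ : YoungDiagram).rowLen i = 0 :=
  rowLen_eq_of_forall_mem_iff fun _ => by simp [notMem_bot]

theorem colLen_bot (j : ℕ) : (⊥ : YoungDiagram).colLen j = 0 :=
  colLen_eq_of_forall_mem_iff fun _ => by simp [notMem_bot]

theorem rowLen_zero_pos_iff {μ : YoungDiagram} : 0 < μ.rowLen 0 ↔ 0 < μ.colLen 0 := by
  rw [← mem_iff_lt_rowLen, mem_iff_lt_colLen]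

def dropFirstCol (μ : YoungDiagram) : YoungDiagram :=
  ofRowLen (fun i => μ.rowLen i - 1)
    (fun i => Nat.sub_le_sub_right (μ.rowLen_anti _ _ i.le_succ) 1) (μ.colLen 0)
    fun _ h => by rw [rowLen_eq_zero h]

theorem mem_dropFirstCol {μ : YoungDiagram} {i j : ℕ} :
    (i, j) ∈ μ.dropFirstCol ↔ (i, j + 1) ∈ μ := by
  rw [dropFirstCol, mem_ofRowLen, mem_iff_lt_rowLen]
  dsimp only
  omega

theorem rowLen_dropFirstCol (μ : YoungDiagram) (i : ℕ) :
    μ.dropFirstCol.rowLen i = μ.rowLen i - 1 :=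
  rowLen_ofRowLen (f := fun i => μ.rowLen i - 1) i

theorem colLen_dropFirstCol (μ : YoungDiagram) : μ.dropFirstCol.colLen 0 = μ.colLen 1 :=
  colLen_eq_of_forall_mem_iff fun _ => by rw [mem_dropFirstCol, mem_iff_lt_colLen]

theorem colLen_dropFirstCol_le (μ : YoungDiagram) : μ.dropFirstCol.colLen 0 ≤ μ.colLen 0 :=
  μ.colLen_dropFirstCol ▸ μ.colLen_anti 0 1 zero_le_one

/-- Rows of `μ` below the new column are discarded. -/
def consCol (h : ℕ) (μ : YoungDiagram) : YoungDiagram :=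
  ofRowLen (fun i => if i < h then μ.rowLen i + 1 else 0)
    (fun i => by
      have := μ.rowLen_anti i (i + 1) (by omega)
      split_ifs <;> omega)
    h fun i hi => if_neg (by omega)

theorem mem_consCol {h : ℕ} {μ : YoungDiagram} {i j : ℕ} :
    (i, j) ∈ consCol h μ ↔ i < h ∧ (j = 0 ∨ (i, j - 1) ∈ μ) := by
  rw [consCol, mem_ofRowLen]
  dsimp only
  split_ifs with hi
  · rw [mem_iff_lt_rowLen]
    omega
  · simp [hi]

theorem rowLen_consCol (h : ℕ) (μ : YoungDiagram) (i : ℕ) :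
    (consCol h μ).rowLen i = if i < h then μ.rowLen i + 1 else 0 :=
  rowLen_ofRowLen i

theorem colLen_consCol (h : ℕ) (μ : YoungDiagram) : (consCol h μ).colLen 0 = h :=
  colLen_eq_of_forall_mem_iff fun _ => by simp [mem_consCol]

theorem consCol_dropFirstCol (μ : YoungDiagram) : consCol (μ.colLen 0) μ.dropFirstCol = μ := by
  refine SetLike.ext fun ⟨i, j⟩ => ?_
  rw [mem_consCol]
  rcases j with _ | j
  · simp [mem_iff_lt_colLen]
  · rw [Nat.add_sub_cancel, mem_dropFirstCol]
    exact ⟨fun h => h.2.resolve_left j.succ_ne_zero, fun h => ⟨lt_colLen_zero h, .inr h⟩⟩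

theorem dropFirstCol_consCol {h : ℕ} {μ : YoungDiagram} (hμ : μ.colLen 0 ≤ h) :
    (consCol h μ).dropFirstCol = μ := by
  refine SetLike.ext fun ⟨i, j⟩ => ?_
  rw [mem_dropFirstCol, mem_consCol, Nat.add_sub_cancel]
  exact ⟨fun h => h.2.resolve_left j.succ_ne_zero,
    fun h => ⟨(lt_colLen_zero h).trans_le hμ, .inr h⟩⟩

end YoungDiagram

open YoungDiagram

theorem cornerCount_eq_card_filter (μ : YoungDiagram) {N : ℕ} (hN : μ.colLen 0 ≤ N) :
    cornerCount μ = #{i ∈ range N | μ.rowLen (i + 1) < μ.rowLen i} := by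
  have hset : {c : ℕ × ℕ | c ∈ μ ∧ (c.1 + 1, c.2) ∉ μ ∧ (c.1, c.2 + 1) ∉ μ} =
      ({i ∈ range N | μ.rowLen (i + 1) < μ.rowLen i}.image
        fun i => (i, μ.rowLen i - 1) : Finset (ℕ × ℕ)) := by
    ext ⟨i, j⟩
    simp only [Set.mem_ofPred_eq, coe_image, coe_filter, mem_range,
      Set.mem_image, Prod.mk.injEq, mem_iff_lt_rowLen]
    constructor
    · rintro ⟨h₁, h₂, h₃⟩
      have : i < μ.colLen 0 := lt_colLen_zero (mem_iff_lt_rowLen.2 h₁)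
      exact ⟨i, ⟨by omega, by omega⟩, rfl, by omega⟩
    · rintro ⟨i, ⟨-, h⟩, rfl, rfl⟩
      omega
  rw [cornerCount, hset, Set.ncard_coe_finset,
    Finset.card_image_of_injective _ fun a b h => (Prod.mk.inj h).1]

theorem cornerCount_consCol {μ : YoungDiagram} {h : ℕ} (hμ : μ.colLen 0 ≤ h) (hh : 0 < h) :
    cornerCount (consCol h μ) = cornerCount μ + if μ.colLen 0 < h then 1 else 0 := by
  obtain ⟨r, rfl⟩ : ∃ r, h = r + 1 := ⟨h - 1, by omega⟩
  rw [cornerCount_eq_card_filter _ (colLen_consCol _ μ).le, cornerCount_eq_card_filter μ hμ,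
    range_add_one, filter_insert, filter_insert]
  have hrest : {i ∈ range r | (consCol (r + 1) μ).rowLen (i + 1) <
      (consCol (r + 1) μ).rowLen i} = {i ∈ range r | μ.rowLen (i + 1) < μ.rowLen i} :=
    filter_congr fun i hi => by
      rw [mem_range] at hi
      rw [rowLen_consCol, rowLen_consCol, if_pos (by omega), if_pos (by omega)]
      omega
  have hcons : (consCol (r + 1) μ).rowLen (r + 1) < (consCol (r + 1) μ).rowLen r := by
    simp [rowLen_consCol]
  have hlast : μ.rowLen (r + 1) < μ.rowLen r ↔ ¬ μ.colLen 0 < r + 1 := by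
    rw [rowLen_eq_zero (show μ.colLen 0 ≤ r + 1 from hμ), ← mem_iff_lt_rowLen,
      mem_iff_lt_colLen]
    omega
  rw [hrest, if_pos hcons, card_insert_of_notMem (by simp)]
  by_cases hlt : μ.colLen 0 < r + 1
  · rw [if_neg (hlast.not.2 (not_not.2 hlt)), if_pos hlt]
  · rw [if_pos (hlast.2 hlt), if_neg hlt, card_insert_of_notMem (by simp)]

theorem Finset.sum_pow_card_le_mul_succ_pow_card_lt {α R : Type*} [LinearOrder α]
    [CommSemiring R] (s : Finset α) (x : R) :
    ∑ t ∈ s, x ^ #{i ∈ s | i ≤ t} * (x + 1) ^ #{i ∈ s | t < i} + x ^ (#s + 1) =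
      x * (x + 1) ^ #s := by
  induction s using Finset.induction_on_max with
  | empty => simp
  | insert a s ha ih =>
    have ha' : a ∉ s := fun h => lt_irrefl a (ha a h)
    have hle : ∀ t ∈ s, ¬ a ≤ t := fun t ht => not_le.2 (ha t ht)
    have hterm : ∀ t ∈ s,
        x ^ #{i ∈ insert a s | i ≤ t} * (x + 1) ^ #{i ∈ insert a s | t < i} =
          (x + 1) * (x ^ #{i ∈ s | i ≤ t} * (x + 1) ^ #{i ∈ s | t < i}) := fun t ht => by
      rw [filter_insert, filter_insert, if_neg (hle t ht), if_pos (ha t ht),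
        card_insert_of_notMem (by simp [ha']), pow_succ]
      ring
    have hlast : #{i ∈ insert a s | i ≤ a} = #s + 1 := by
      rw [filter_true_of_mem fun i hi => (mem_insert.1 hi).elim le_of_eq fun h => (ha i h).le,
        card_insert_of_notMem ha']
    have hnone : #{i ∈ insert a s | a < i} = 0 := by
      rw [card_eq_zero, filter_eq_empty_iff]
      exact fun i hi => not_lt.2 ((mem_insert.1 hi).elim (fun h => h.le) fun h => (ha i h).le)
    rw [sum_insert ha', sum_congr rfl hterm, ← mul_sum, hlast, hnone, card_insert_of_notMem ha',
      pow_zero, mul_one]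
    calc _ = (x + 1) * (∑ t ∈ s, x ^ #{i ∈ s | i ≤ t} * (x + 1) ^ #{i ∈ s | t < i} +
          x ^ (#s + 1)) := by ring
      _ = _ := by rw [ih]; ring

/-- A permutation tableau of size `n` is determined by its shape, by the row `top j` of the
topmost `1` of each column `j`, and by `res i`, which is `c + 1` when the rightmost restricted `0`
(a `0` with a `1` above it) of row `i` lies in column `c`, and `0` when row `i` has none. The
same data describe a tree-like tableau: `top j` is the topmost point of its column `j + 1` and
`res i` the leftmost point of its row `i`. -/
@[ext]
structure TableauCode (n : ℕ) where
  rows : ℕ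
  rows_pos : 0 < rows
  shape : YoungDiagram
  colLen_le : shape.colLen 0 ≤ rows
  half : rows + shape.rowLen 0 = n
  top : ℕ → ℕ
  res : ℕ → ℕ
  top_mem : ∀ j < shape.rowLen 0, (top j, j) ∈ shape
  top_eq_zero : ∀ j, shape.rowLen 0 ≤ j → top j = 0
  res_mem : ∀ i, 0 < res i → (i, res i - 1) ∈ shape
  top_lt_of_res_pos : ∀ i, 0 < res i → top (res i - 1) < i
  res_top_le : ∀ j < shape.rowLen 0, res (top j) ≤ j

namespace TableauCode

variable {n : ℕ} (D : TableauCode n)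

theorem top_lt_rows {j : ℕ} (hj : j < D.shape.rowLen 0) : D.top j < D.rows :=
  (lt_colLen_zero (D.top_mem j hj)).trans_le D.colLen_le

theorem lt_rows_of_res_pos {i : ℕ} (h : 0 < D.res i) : i < D.rows :=
  (lt_colLen_zero (D.res_mem i h)).trans_le D.colLen_le

theorem res_eq_zero_of_colLen_le {i : ℕ} (hi : D.shape.colLen 0 ≤ i) : D.res i = 0 := by
  by_contra h
  have := lt_colLen_zero (D.res_mem i (Nat.pos_of_ne_zero h))
  omega

theorem res_eq_zero_of_rows_le {i : ℕ} (hi : D.rows ≤ i) : D.res i = 0 :=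
  D.res_eq_zero_of_colLen_le (D.colLen_le.trans hi)

theorem res_zero : D.res 0 = 0 :=
  Nat.eq_zero_of_not_pos fun h => Nat.not_lt_zero _ (D.top_lt_of_res_pos 0 h)

end TableauCode

attribute [ext] PermTableau

namespace PermTableau

variable {n : ℕ} (P : PermTableau n)

theorem mem_shape_of_filling {i j : ℕ} (h : P.filling (i, j) = true) : (i, j) ∈ P.shape :=
  not_imp_comm.1 (P.support _) (by simp [h])

def IsRestrictedZero (i j : ℕ) : Prop :=
  (i, j) ∈ P.shape ∧ P.filling (i, j) = false ∧ ∃ i' < i, P.filling (i', j) = true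

noncomputable def top (j : ℕ) : ℕ := sInf {i | P.filling (i, j) = true}

open scoped Classical in
noncomputable def res (i : ℕ) : ℕ :=
  {j ∈ range (P.shape.rowLen 0) | P.IsRestrictedZero i j}.sup (· + 1)

theorem filling_top {j : ℕ} (hj : j < P.shape.rowLen 0) : P.filling (P.top j, j) = true :=
  Nat.sInf_mem (P.col_one j hj)

theorem top_eq_zero {j : ℕ} (hj : P.shape.rowLen 0 ≤ j) : P.top j = 0 := by
  have : {i | P.filling (i, j) = true} = ∅ :=
    Set.eq_empty_of_forall_notMem fun i h => by
      have := lt_rowLen_zero (P.mem_shape_of_filling h)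
      omega
  rw [top, this, Nat.sInf_empty]

theorem top_le {i j : ℕ} (h : P.filling (i, j) = true) : P.top j ≤ i := Nat.sInf_le h

theorem lt_res {i j : ℕ} (h : P.IsRestrictedZero i j) : j < P.res i := by
  classical
  exact Nat.lt_of_succ_le <| le_sup (f := (· + 1)) <|
    mem_filter.2 ⟨mem_range.2 (lt_rowLen_zero h.1), h⟩

theorem isRestrictedZero_res {i : ℕ} (h : 0 < P.res i) : P.IsRestrictedZero i (P.res i - 1) := by
  classical
  rw [res] at h ⊢
  set S := {j ∈ range (P.shape.rowLen 0) | P.IsRestrictedZero i j}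
  obtain ⟨j, hj, hres⟩ := exists_mem_eq_sup S
    (nonempty_of_ne_empty fun he => by rw [he, sup_empty] at h; exact lt_irrefl _ h) (· + 1)
  rw [hres, Nat.add_sub_cancel]
  exact (mem_filter.1 hj).2

/-- Restricted `0`s only have `0`s to their left. -/
theorem filling_eq_true_iff (i j : ℕ) :
    P.filling (i, j) = true ↔ (i, j) ∈ P.shape ∧ P.top j ≤ i ∧ P.res i ≤ j := by
  constructor
  · intro h
    refine ⟨P.mem_shape_of_filling h, P.top_le h, Nat.not_lt.1 fun hlt => ?_⟩
    obtain ⟨hmem, hzero, hone⟩ := P.isRestrictedZero_res (Nat.zero_lt_of_lt hlt)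
    rcases Nat.lt_or_ge j (P.res i - 1) with hj | hj
    · simp [P.avoid i _ hmem hzero hone j hj] at h
    · simp [show j = P.res i - 1 by omega, hzero] at h
  · rintro ⟨hmem, htop, hres⟩
    by_contra hzero
    have hj := lt_rowLen_zero hmem
    have htop' : P.top j < i := htop.lt_of_ne fun he => hzero (he ▸ P.filling_top hj)
    exact absurd (P.lt_res ⟨hmem, by simpa using hzero, _, htop', P.filling_top hj⟩) (by omega)

noncomputable def toCode : TableauCode n where
  rows := P.rows
  rows_pos := P.rows_pos
  shape := P.shape
  colLen_le := P.rows_ge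
  half := P.half
  top := P.top
  res := P.res
  top_mem j hj := P.mem_shape_of_filling (P.filling_top hj)
  top_eq_zero _ := P.top_eq_zero
  res_mem i h := (P.isRestrictedZero_res h).1
  top_lt_of_res_pos i h := by
    obtain ⟨-, -, i', hi', hone⟩ := P.isRestrictedZero_res h
    exact (P.top_le hone).trans_lt hi'
  res_top_le j hj := ((P.filling_eq_true_iff _ _).1 (P.filling_top hj)).2.2

def ofCode (D : TableauCode n) : PermTableau n where
  shape := D.shape
  rows := D.rows
  rows_pos := D.rows_pos
  rows_ge := D.colLen_le
  half := D.half
  filling c := decide (c ∈ D.shape ∧ D.top c.2 ≤ c.1 ∧ D.res c.1 ≤ c.2)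
  support c hc := by simp [hc]
  col_one j hj := ⟨D.top j, by simp [D.top_mem j hj, D.res_top_le j hj]⟩
  avoid i j hmem hzero := by
    rintro ⟨i', hi', hone⟩ j' hj'
    simp only [decide_eq_true_eq, decide_eq_false_iff_not] at hzero hone ⊢
    have : j < D.res i := Nat.lt_of_not_le fun h => hzero ⟨hmem, by omega, h⟩
    omega

theorem ofCode_filling (D : TableauCode n) (i j : ℕ) :
    (ofCode D).filling (i, j) = true ↔ (i, j) ∈ D.shape ∧ D.top j ≤ i ∧ D.res i ≤ j :=
  decide_eq_true_iff

theorem top_ofCode (D : TableauCode n) : (ofCode D).top = D.top := by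
  funext j
  by_cases hj : j < D.shape.rowLen 0
  · refine le_antisymm (Nat.sInf_le ?_) ?_
    · exact (ofCode_filling D _ _).2 ⟨D.top_mem j hj, le_rfl, D.res_top_le j hj⟩
    · exact ((ofCode_filling D _ _).1 ((ofCode D).filling_top hj)).2.1
  · rw [D.top_eq_zero j (by omega), (ofCode D).top_eq_zero (Nat.le_of_not_lt hj)]

theorem isRestrictedZero_ofCode_iff (D : TableauCode n) {i j : ℕ} :
    (ofCode D).IsRestrictedZero i j ↔ (i, j) ∈ D.shape ∧ D.top j < i ∧ j < D.res i := by
  simp only [IsRestrictedZero, Bool.eq_false_iff, ne_eq, ofCode_filling]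
  constructor
  · rintro ⟨hmem, hzero, i', hi', -, htop, -⟩
    exact ⟨hmem, by omega, Nat.lt_of_not_le fun h => hzero ⟨hmem, by omega, h⟩⟩
  · rintro ⟨hmem, htop, hres⟩
    have hj := lt_rowLen_zero hmem
    exact ⟨hmem, by omega, _, htop, D.top_mem j hj, le_rfl, D.res_top_le j hj⟩

theorem res_ofCode (D : TableauCode n) : (ofCode D).res = D.res := by
  funext i
  refine le_antisymm (Nat.not_lt.1 fun h => ?_) (Nat.not_lt.1 fun h => ?_)
  · have := ((isRestrictedZero_ofCode_iff D).1 ((ofCode D).isRestrictedZero_res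
      (Nat.zero_lt_of_lt h))).2.2
    omega
  · have hpos := Nat.zero_lt_of_lt h
    have := (ofCode D).lt_res ((isRestrictedZero_ofCode_iff D).2
      ⟨D.res_mem i hpos, D.top_lt_of_res_pos i hpos, by omega⟩)
    omega

noncomputable def equivCode (n : ℕ) : PermTableau n ≃ TableauCode n where
  toFun := toCode
  invFun := ofCode
  left_inv P := PermTableau.ext rfl rfl <| funext fun ⟨i, j⟩ =>
    Bool.eq_iff_iff.2 <| (ofCode_filling _ i j).trans (P.filling_eq_true_iff i j).symm
  right_inv D := TableauCode.ext rfl rfl (top_ofCode D) (res_ofCode D)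

end PermTableau

attribute [ext] TreeLike

namespace TreeLike

variable {n : ℕ} (T : TreeLike n)

theorem mem_shape_of_point {i j : ℕ} (h : T.point (i, j) = true) : (i, j) ∈ T.shape :=
  not_imp_comm.1 (T.support _) (by simp [h])

noncomputable def colHead (j : ℕ) : ℕ := sInf {i | T.point (i, j) = true}

noncomputable def rowHead (i : ℕ) : ℕ := sInf {j | T.point (i, j) = true}

theorem point_colHead {j : ℕ} (hj : j < T.shape.rowLen 0) : T.point (T.colHead j, j) = true :=
  Nat.sInf_mem (T.col_point j hj)

theorem point_rowHead {i : ℕ} (hi : i < T.shape.colLen 0) : T.point (i, T.rowHead i) = true :=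
  Nat.sInf_mem (T.row_point i hi)

theorem colHead_le {i j : ℕ} (h : T.point (i, j) = true) : T.colHead j ≤ i := Nat.sInf_le h

theorem rowHead_le {i j : ℕ} (h : T.point (i, j) = true) : T.rowHead i ≤ j := Nat.sInf_le h

theorem colHead_eq_zero {j : ℕ} (hj : T.shape.rowLen 0 ≤ j) : T.colHead j = 0 := by
  have : {i | T.point (i, j) = true} = ∅ :=
    Set.eq_empty_of_forall_notMem fun i h => by
      have := lt_rowLen_zero (T.mem_shape_of_point h)
      omega
  rw [colHead, this, Nat.sInf_empty]

theorem rowHead_eq_zero {i : ℕ} (hi : T.shape.colLen 0 ≤ i) : T.rowHead i = 0 := by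
  have : {j | T.point (i, j) = true} = ∅ :=
    Set.eq_empty_of_forall_notMem fun j h => by
      have := lt_colLen_zero (T.mem_shape_of_point h)
      omega
  rw [rowHead, this, Nat.sInf_empty]

theorem colHead_zero : T.colHead 0 = 0 := Nat.eq_zero_of_le_zero (T.colHead_le T.root)

theorem rowLen_zero_pos : 0 < T.shape.rowLen 0 :=
  mem_iff_lt_rowLen.1 (T.mem_shape_of_point T.root)

theorem colLen_zero_pos : 0 < T.shape.colLen 0 :=
  mem_iff_lt_colLen.1 (T.mem_shape_of_point T.root)

theorem lt_colLen_of_rowHead_pos {i : ℕ} (h : 0 < T.rowHead i) : i < T.shape.colLen 0 :=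
  Nat.not_le.1 fun hi => by simp [T.rowHead_eq_zero hi] at h

theorem colHead_lt_or_rowHead_lt {i j : ℕ} (h : T.point (i, j) = true) (hne : (i, j) ≠ (0, 0)) :
    T.colHead j < i ∨ T.rowHead i < j := by
  rcases T.conn i j h hne with ⟨i', hi', h'⟩ | ⟨j', hj', h'⟩
  · exact .inl ((T.colHead_le h').trans_lt hi')
  · exact .inr ((T.rowHead_le h').trans_lt hj')

theorem point_iff (i j : ℕ) : T.point (i, j) = true ↔
    (j < T.shape.rowLen 0 ∧ i = T.colHead j) ∨ (i < T.shape.colLen 0 ∧ j = T.rowHead i) := by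
  constructor
  · intro h
    have hmem := T.mem_shape_of_point h
    rcases T.cond i j h with habove | hleft
    · refine .inl ⟨lt_rowLen_zero hmem,
        le_antisymm (Nat.not_lt.1 fun hlt => ?_) (T.colHead_le h)⟩
      simpa [T.point_colHead (lt_rowLen_zero hmem)] using habove _ hlt
    · refine .inr ⟨lt_colLen_zero hmem,
        le_antisymm (Nat.not_lt.1 fun hlt => ?_) (T.rowHead_le h)⟩
      simpa [T.point_rowHead (lt_colLen_zero hmem)] using hleft _ hlt
  · rintro (⟨hj, rfl⟩ | ⟨hi, rfl⟩)
    · exact T.point_colHead hj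
    · exact T.point_rowHead hi

noncomputable def toCode : TableauCode n where
  rows := T.shape.colLen 0
  rows_pos := T.colLen_zero_pos
  shape := T.shape.dropFirstCol
  colLen_le := colLen_dropFirstCol_le _
  half := by
    have := T.half
    have := T.rowLen_zero_pos
    rw [rowLen_dropFirstCol]
    omega
  top j := T.colHead (j + 1)
  res := T.rowHead
  top_mem j hj := by
    rw [rowLen_dropFirstCol] at hj
    exact mem_dropFirstCol.2 (T.mem_shape_of_point (T.point_colHead (by omega)))
  top_eq_zero j hj := by
    rw [rowLen_dropFirstCol] at hj
    exact T.colHead_eq_zero (by omega)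
  res_mem i h := by
    rw [mem_dropFirstCol, Nat.sub_add_cancel h]
    exact T.mem_shape_of_point (T.point_rowHead (T.lt_colLen_of_rowHead_pos h))
  top_lt_of_res_pos i h := by
    rw [Nat.sub_add_cancel h]
    simpa using T.colHead_lt_or_rowHead_lt (T.point_rowHead (T.lt_colLen_of_rowHead_pos h))
      (by simp; omega)
  res_top_le j hj := by
    rw [rowLen_dropFirstCol] at hj
    have := T.colHead_lt_or_rowHead_lt (T.point_colHead (j := j + 1) (by omega)) (by simp)
    omega

end TreeLike

namespace TableauCode

variable {n : ℕ} (D : TableauCode n)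

/-- The row of the topmost point of column `j` of the tree-like tableau, whose column `0` is the
extra column of the root. -/
def colTop : ℕ → ℕ
  | 0 => 0
  | j + 1 => D.top j

theorem colTop_lt_rows {j : ℕ} (hj : j < D.shape.rowLen 0 + 1) : D.colTop j < D.rows := by
  cases j with
  | zero => exact D.rows_pos
  | succ j => exact D.top_lt_rows (by omega)

theorem colTop_res_lt {i : ℕ} (h : 0 < D.res i) : D.colTop (D.res i) < i := by
  obtain ⟨c, hc⟩ : ∃ c, D.res i = c + 1 := ⟨D.res i - 1, by omega⟩
  simpa [colTop, hc] using D.top_lt_of_res_pos i h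

theorem colTop_res_le (i : ℕ) : D.colTop (D.res i) ≤ i := by
  rcases Nat.eq_zero_or_pos (D.res i) with h | h
  · simp [h, colTop]
  · exact (D.colTop_res_lt h).le

theorem res_lt_rowLen_succ (i : ℕ) : D.res i < D.shape.rowLen 0 + 1 := by
  rcases Nat.eq_zero_or_pos (D.res i) with h | h
  · omega
  · have := lt_rowLen_zero (D.res_mem i h)
    omega

theorem res_colTop_lt {j : ℕ} (h₀ : 0 < j) (hj : j < D.shape.rowLen 0 + 1) :
    D.res (D.colTop j) < j := by
  obtain ⟨j, rfl⟩ : ∃ j', j = j' + 1 := ⟨j - 1, by omega⟩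
  exact Nat.lt_succ_of_le (D.res_top_le j (by omega))

theorem res_colTop_le {j : ℕ} (hj : j < D.shape.rowLen 0 + 1) : D.res (D.colTop j) ≤ j := by
  rcases Nat.eq_zero_or_pos j with rfl | h₀
  · simp [colTop, res_zero]
  · exact (D.res_colTop_lt h₀ hj).le

def IsPoint (i j : ℕ) : Prop :=
  (j < D.shape.rowLen 0 + 1 ∧ i = D.colTop j) ∨ (i < D.rows ∧ j = D.res i)

instance (i j : ℕ) : Decidable (D.IsPoint i j) :=
  inferInstanceAs (Decidable (_ ∨ _))

theorem mem_consCol_of_isPoint {i j : ℕ} (h : D.IsPoint i j) :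
    (i, j) ∈ consCol D.rows D.shape := by
  rw [mem_consCol]
  rcases h with ⟨hj, rfl⟩ | ⟨hi, rfl⟩
  · refine ⟨D.colTop_lt_rows hj, ?_⟩
    cases j with
    | zero => exact .inl rfl
    | succ j => exact .inr (D.top_mem j (by omega))
  · rcases Nat.eq_zero_or_pos (D.res i) with h | h
    · exact ⟨hi, .inl h⟩
    · exact ⟨hi, .inr (D.res_mem i h)⟩

theorem isPoint_cond {i j : ℕ} (h : D.IsPoint i j) :
    (∀ i' < i, ¬ D.IsPoint i' j) ∨ (∀ j' < j, ¬ D.IsPoint i j') := by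
  rcases h with ⟨-, rfl⟩ | ⟨-, rfl⟩
  · refine .inl fun i' hi' h' => ?_
    rcases h' with ⟨-, rfl⟩ | ⟨-, rfl⟩
    · omega
    · have := D.colTop_res_le i'
      omega
  · refine .inr fun j' hj' h' => ?_
    rcases h' with ⟨hj, rfl⟩ | ⟨-, rfl⟩
    · have := D.res_colTop_le hj
      omega
    · omega

theorem isPoint_conn {i j : ℕ} (h : D.IsPoint i j) (hne : (i, j) ≠ (0, 0)) :
    (∃ i' < i, D.IsPoint i' j) ∨ (∃ j' < j, D.IsPoint i j') := by
  rcases h with ⟨hj, rfl⟩ | ⟨hi, rfl⟩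
  · rcases Nat.eq_zero_or_pos j with rfl | h₀
    · exact absurd rfl hne
    · exact .inr ⟨_, D.res_colTop_lt h₀ hj, .inr ⟨D.colTop_lt_rows hj, rfl⟩⟩
  · rcases Nat.eq_zero_or_pos (D.res i) with h | h
    · refine .inl ⟨0, Nat.pos_of_ne_zero fun hi => hne (by simp [hi, D.res_zero]), .inl ?_⟩
      simp [h, colTop]
    · exact .inl ⟨_, D.colTop_res_lt h, .inl ⟨D.res_lt_rowLen_succ i, rfl⟩⟩

def toTreeLike : TreeLike n where
  shape := consCol D.rows D.shape
  half := by
    rw [colLen_consCol, rowLen_consCol, if_pos D.rows_pos]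
    have := D.half
    omega
  point c := decide (D.IsPoint c.1 c.2)
  support c hc := decide_eq_false fun h => hc (D.mem_consCol_of_isPoint h)
  root := decide_eq_true (.inl ⟨Nat.zero_lt_succ _, rfl⟩)
  row_point i hi := ⟨D.res i, decide_eq_true (.inr ⟨by rwa [colLen_consCol] at hi, rfl⟩)⟩
  col_point j hj := ⟨D.colTop j, decide_eq_true
    (.inl ⟨by rwa [rowLen_consCol, if_pos D.rows_pos] at hj, rfl⟩)⟩
  cond i j h := by
    simpa only [decide_eq_false_iff_not] using D.isPoint_cond (of_decide_eq_true h)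
  conn i j h hne := by
    simpa only [decide_eq_true_eq] using D.isPoint_conn (of_decide_eq_true h) hne

theorem point_toTreeLike (i j : ℕ) : D.toTreeLike.point (i, j) = true ↔ D.IsPoint i j :=
  decide_eq_true_iff

theorem rowLen_zero_toTreeLike : D.toTreeLike.shape.rowLen 0 = D.shape.rowLen 0 + 1 := by
  rw [toTreeLike, rowLen_consCol, if_pos D.rows_pos]

theorem colLen_zero_toTreeLike : D.toTreeLike.shape.colLen 0 = D.rows :=
  colLen_consCol _ _

theorem colHead_toTreeLike (j : ℕ) : D.toTreeLike.colHead j = D.colTop j := by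
  by_cases hj : j < D.shape.rowLen 0 + 1
  · refine le_antisymm (D.toTreeLike.colHead_le ((D.point_toTreeLike _ _).2 (.inl ⟨hj, rfl⟩)))
      ?_
    rcases (D.point_toTreeLike _ _).1 (D.toTreeLike.point_colHead (j := j)
      (by rwa [rowLen_zero_toTreeLike])) with ⟨-, h⟩ | ⟨-, h⟩
    · exact h.ge
    · exact (congrArg D.colTop h).trans_le (D.colTop_res_le _)
  · rw [D.toTreeLike.colHead_eq_zero (by rw [rowLen_zero_toTreeLike]; omega)]
    obtain ⟨j, rfl⟩ : ∃ j', j = j' + 1 := ⟨j - 1, by omega⟩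
    exact (D.top_eq_zero j (by omega)).symm

theorem rowHead_toTreeLike (i : ℕ) : D.toTreeLike.rowHead i = D.res i := by
  by_cases hi : i < D.rows
  · refine le_antisymm (D.toTreeLike.rowHead_le ((D.point_toTreeLike _ _).2 (.inr ⟨hi, rfl⟩)))
      ?_
    rcases (D.point_toTreeLike _ _).1 (D.toTreeLike.point_rowHead (i := i)
      (by rwa [colLen_zero_toTreeLike])) with ⟨hj, h⟩ | ⟨-, h⟩
    · exact (congrArg D.res h).trans_le (D.res_colTop_le hj)
    · exact h.ge
  · rw [D.toTreeLike.rowHead_eq_zero (by rw [colLen_zero_toTreeLike]; omega),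
      D.res_eq_zero_of_rows_le (by omega)]

end TableauCode

theorem TreeLike.colTop_toCode {n : ℕ} (T : TreeLike n) : T.toCode.colTop = T.colHead := by
  funext j
  cases j with
  | zero => exact T.colHead_zero.symm
  | succ j => rfl

noncomputable def TreeLike.equivCode (n : ℕ) : TreeLike n ≃ TableauCode n where
  toFun := TreeLike.toCode
  invFun := TableauCode.toTreeLike
  left_inv T := by
    refine TreeLike.ext (consCol_dropFirstCol T.shape)
      (funext fun ⟨i, j⟩ => Bool.eq_iff_iff.2 ?_)
    rw [TableauCode.point_toTreeLike, T.point_iff, TableauCode.IsPoint, T.colTop_toCode]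
    have := T.rowLen_zero_pos
    simp only [toCode, rowLen_dropFirstCol, Nat.sub_add_cancel this]
  right_inv D := TableauCode.ext (colLen_consCol _ _) (dropFirstCol_consCol D.colLen_le)
    (funext fun j => D.colHead_toTreeLike (j + 1)) (funext D.rowHead_toTreeLike)

namespace TableauCode

variable {m : ℕ}

def addEmptyRow (Q : TableauCode m) : TableauCode (m + 1) :=
  { Q with
    rows := Q.rows + 1
    rows_pos := Q.rows.succ_pos
    colLen_le := Q.colLen_le.trans (Nat.le_succ _)
    half := by have := Q.half; omega }

theorem addEmptyRow_colLen_lt (Q : TableauCode m) :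
    Q.addEmptyRow.shape.colLen 0 < Q.addEmptyRow.rows :=
  Nat.lt_succ_of_le Q.colLen_le

def removeEmptyRow (P : TableauCode (m + 2)) (h : P.shape.colLen 0 < P.rows) :
    TableauCode (m + 1) :=
  { P with
    rows := P.rows - 1
    rows_pos := by
      by_contra h'
      have := rowLen_zero_pos_iff.not.2 (show ¬ 0 < P.shape.colLen 0 by omega)
      have := P.half
      omega
    colLen_le := by omega
    half := by have := P.half; omega }

/-- Tableaux whose last border edge is a south step are those with an empty bottom row. -/
def equivEmptyLastRow (m : ℕ) :
    {P : TableauCode (m + 2) // P.shape.colLen 0 < P.rows} ≃ TableauCode (m + 1) where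
  toFun P := removeEmptyRow P.1 P.2
  invFun Q := ⟨Q.addEmptyRow, Q.addEmptyRow_colLen_lt⟩
  left_inv P := Subtype.ext <| TableauCode.ext (Nat.sub_add_cancel P.1.rows_pos) rfl rfl rfl
  right_inv _ := TableauCode.ext (Nat.add_sub_cancel _ _) rfl rfl rfl

def unres (D : TableauCode m) : Finset ℕ := {i ∈ range D.rows | D.res i = 0}

theorem mem_unres {D : TableauCode m} {i : ℕ} : i ∈ D.unres ↔ i < D.rows ∧ D.res i = 0 := by
  rw [unres, mem_filter, mem_range]

theorem unres_addEmptyRow (Q : TableauCode m) : Q.addEmptyRow.unres = insert Q.rows Q.unres := by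
  ext i
  simp only [mem_insert, mem_unres, addEmptyRow]
  constructor
  · rintro ⟨hi, hres⟩
    exact (Nat.lt_succ_iff_lt_or_eq.1 hi).symm.imp_right fun h => ⟨h, hres⟩
  · rintro (rfl | ⟨hi, hres⟩)
    · exact ⟨Nat.lt_succ_self _, Q.res_eq_zero_of_rows_le le_rfl⟩
    · exact ⟨hi.trans (Nat.lt_succ_self _), hres⟩

def unresBelow (Q : TableauCode m) (t : ℕ) : Finset ℕ := {i ∈ Q.unres | t < i}

/-- A first column that can be prepended to `Q`: its topmost `1` lies in an unrestricted row `t`;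
below `t`, restricted rows get a `0`, and unrestricted rows get a `1` unless they lie in `B`,
where they get a restricted `0`. -/
abbrev Extension (Q : TableauCode m) : Type :=
  Σ t : Q.unres, (Q.unresBelow t).powerset

def addFirstCol (Q : TableauCode m) (e : Q.Extension) : TableauCode (m + 1) where
  rows := Q.rows
  rows_pos := Q.rows_pos
  shape := consCol Q.rows Q.shape
  colLen_le := (colLen_consCol _ _).le
  half := by rw [rowLen_consCol, if_pos Q.rows_pos]; have := Q.half; omega
  top
    | 0 => e.1
    | j + 1 => Q.top j
  res i := if Q.res i = 0 then (if i ∈ e.2.1 then 1 else 0) else Q.res i + 1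
  top_mem j hj := by
    rw [rowLen_consCol, if_pos Q.rows_pos] at hj
    rw [mem_consCol]
    cases j with
    | zero => exact ⟨(mem_unres.1 e.1.2).1, .inl rfl⟩
    | succ j => exact ⟨Q.top_lt_rows (by omega), .inr (Q.top_mem j (by omega))⟩
  top_eq_zero j hj := by
    rw [rowLen_consCol, if_pos Q.rows_pos] at hj
    obtain ⟨j, rfl⟩ : ∃ j', j = j' + 1 := ⟨j - 1, by omega⟩
    exact Q.top_eq_zero j (by omega)
  res_mem i h := by
    rw [mem_consCol]
    split_ifs at h ⊢ with hres hB
    · exact ⟨(mem_unres.1 (mem_filter.1 (mem_powerset.1 e.2.2 hB)).1).1, .inl rfl⟩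
    · simp at h
    · have hpos := Nat.pos_of_ne_zero hres
      exact ⟨Q.lt_rows_of_res_pos hpos, .inr (by simpa using Q.res_mem i hpos)⟩
  top_lt_of_res_pos i h := by
    split_ifs at h ⊢ with hres hB
    · exact (mem_filter.1 (mem_powerset.1 e.2.2 hB)).2
    · simp at h
    · obtain ⟨c, hc⟩ := Nat.exists_eq_succ_of_ne_zero hres
      simpa [hc] using Q.top_lt_of_res_pos i (Nat.pos_of_ne_zero hres)
  res_top_le j hj := by
    rw [rowLen_consCol, if_pos Q.rows_pos] at hj
    cases j with
    | zero =>
      have ht := e.1.2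
      have hB : e.1.1 ∉ e.2.1 := fun hB => lt_irrefl _ (mem_filter.1 (mem_powerset.1 e.2.2 hB)).2
      simp [(mem_unres.1 ht).2, hB]
    | succ j =>
      have := Q.res_top_le j (by omega)
      dsimp only
      split_ifs <;> omega

section removeFirstCol

variable (P : TableauCode (m + 1)) (h : P.rows ≤ P.shape.colLen 0)
include h

theorem rowLen_zero_pos_of_full : 0 < P.shape.rowLen 0 :=
  rowLen_zero_pos_iff.2 (P.rows_pos.trans_le h)

def removeFirstCol : TableauCode m where
  rows := P.rows
  rows_pos := P.rows_pos
  shape := P.shape.dropFirstCol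
  colLen_le := (colLen_dropFirstCol_le _).trans P.colLen_le
  half := by
    have := P.half
    have := P.rowLen_zero_pos_of_full h
    rw [rowLen_dropFirstCol]
    omega
  top j := P.top (j + 1)
  res i := P.res i - 1
  top_mem j hj := by
    rw [rowLen_dropFirstCol] at hj
    exact mem_dropFirstCol.2 (P.top_mem _ (by omega))
  top_eq_zero j hj := by
    rw [rowLen_dropFirstCol] at hj
    exact P.top_eq_zero _ (by omega)
  res_mem i hi := by
    rw [mem_dropFirstCol, show P.res i - 1 - 1 + 1 = P.res i - 1 by omega]
    exact P.res_mem i (by omega)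
  top_lt_of_res_pos i hi := by
    rw [show P.res i - 1 - 1 + 1 = P.res i - 1 by omega]
    exact P.top_lt_of_res_pos i (by omega)
  res_top_le j hj := by
    rw [rowLen_dropFirstCol] at hj
    have := P.res_top_le (j + 1) (by omega)
    omega

def firstColExtension : (P.removeFirstCol h).Extension :=
  have hw := P.rowLen_zero_pos_of_full h
  ⟨⟨P.top 0, mem_unres.2 ⟨P.top_lt_rows hw,
      Nat.sub_eq_zero_of_le ((P.res_top_le 0 hw).trans zero_le_one)⟩⟩,
    ⟨{i ∈ range P.rows | P.res i = 1}, mem_powerset.2 fun i hi => by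
      obtain ⟨hi, hres⟩ := mem_filter.1 hi
      refine mem_filter.2 ⟨mem_unres.2 ⟨mem_range.1 hi, by simp [removeFirstCol, hres]⟩, ?_⟩
      simpa [hres] using P.top_lt_of_res_pos i (by omega)⟩⟩

end removeFirstCol

theorem sigma_extension_ext {x y : Σ Q : TableauCode m, Q.Extension} (h₁ : x.1 = y.1)
    (h₂ : x.2.1.1 = y.2.1.1) (h₃ : x.2.2.1 = y.2.2.1) : x = y := by
  obtain ⟨Q, ⟨t, ht⟩, ⟨B, hB⟩⟩ := x
  obtain ⟨Q', ⟨t', ht'⟩, ⟨B', hB'⟩⟩ := y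
  dsimp only at h₁ h₂ h₃
  subst h₁ h₂ h₃
  rfl

/-- Tableaux whose last border edge is a west step are those with a full first column. -/
def equivFullFirstCol (m : ℕ) :
    {P : TableauCode (m + 1) // ¬ P.shape.colLen 0 < P.rows} ≃
      Σ Q : TableauCode m, Q.Extension where
  toFun P := ⟨P.1.removeFirstCol (not_lt.1 P.2), P.1.firstColExtension (not_lt.1 P.2)⟩
  invFun x := ⟨x.1.addFirstCol x.2, by simp [addFirstCol, colLen_consCol]⟩
  left_inv P := by
    have hfull : P.1.shape.colLen 0 = P.1.rows := le_antisymm P.1.colLen_le (not_lt.1 P.2)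
    refine Subtype.ext <| TableauCode.ext rfl ?_ (funext fun j => by cases j <;> rfl) ?_
    · simpa [addFirstCol, removeFirstCol, hfull] using consCol_dropFirstCol P.1.shape
    · funext i
      simp only [addFirstCol, removeFirstCol, firstColExtension, mem_filter, mem_range]
      have := P.1.lt_rows_of_res_pos (i := i)
      split_ifs <;> omega
  right_inv x := by
    obtain ⟨Q, ⟨t, ht⟩, ⟨B, hB⟩⟩ := x
    have hB' : ∀ i ∈ B, i < Q.rows ∧ Q.res i = 0 := fun i hi =>
      mem_unres.1 (mem_filter.1 (mem_powerset.1 hB hi)).1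
    refine sigma_extension_ext ?_ rfl ?_
    · refine TableauCode.ext rfl (dropFirstCol_consCol Q.colLen_le) rfl (funext fun i => ?_)
      simp only [removeFirstCol, addFirstCol]
      split_ifs <;> omega
    · ext i
      simp only [firstColExtension, addFirstCol, mem_filter, mem_range]
      constructor
      · rintro ⟨-, hi⟩
        split_ifs at hi with h₁ h₂ <;> first | exact h₂ | omega
      · intro hi
        simp [hi, hB' i hi]

instance : IsEmpty (TableauCode 0) :=
  ⟨fun D => by have := D.half; have := D.rows_pos; omega⟩

def oneRow : TableauCode 1 where
  rows := 1
  rows_pos := one_pos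
  shape := ⊥
  colLen_le := by rw [colLen_bot]; exact zero_le_one
  half := by rw [rowLen_bot]
  top _ := 0
  res _ := 0
  top_mem j hj := by simp [rowLen_bot] at hj
  top_eq_zero _ _ := rfl
  res_mem _ h := absurd h (lt_irrefl 0)
  top_lt_of_res_pos _ h := absurd h (lt_irrefl 0)
  res_top_le _ _ := Nat.zero_le _

instance : Unique (TableauCode 1) where
  default := oneRow
  uniq D := by
    have hw : D.shape.rowLen 0 = 0 := by have := D.half; have := D.rows_pos; omega
    have hc : D.shape.colLen 0 = 0 := by
      by_contra h
      exact absurd (rowLen_zero_pos_iff.2 (Nat.pos_of_ne_zero h)) (by omega)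
    refine TableauCode.ext (show D.rows = 1 by have := D.half; omega) ?_
      (funext fun j => D.top_eq_zero j (by omega))
      (funext fun i => D.res_eq_zero_of_colLen_le (by omega))
    refine SetLike.ext fun ⟨i, j⟩ => ?_
    simp only [oneRow, notMem_bot, iff_false]
    intro h
    have := lt_rowLen_zero h
    omega

def equivLastEdge (m : ℕ) :
    TableauCode (m + 2) ≃ TableauCode (m + 1) ⊕ Σ Q : TableauCode (m + 1), Q.Extension :=
  (Equiv.sumCompl _).symm.trans ((equivEmptyLastRow m).sumCongr (equivFullFirstCol (m + 1)))

instance finite : ∀ m, Finite (TableauCode m)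
  | 0 => inferInstance
  | 1 => inferInstance
  | m + 2 => have := finite (m + 1); .of_equiv _ (equivLastEdge m).symm

noncomputable instance (m : ℕ) : Fintype (TableauCode m) := .ofFinite _

theorem unres_addFirstCol (Q : TableauCode m) (e : Q.Extension) :
    (Q.addFirstCol e).unres = Q.unres \ e.2.1 := by
  ext i
  simp only [mem_sdiff, mem_unres, addFirstCol]
  split_ifs with h₁ h₂ <;> simp [*]

theorem card_unres_addFirstCol (Q : TableauCode m) (e : Q.Extension) :
    #(Q.addFirstCol e).unres = #{i ∈ Q.unres | i ≤ e.1.1} + #(Q.unresBelow e.1 \ e.2.1) := by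
  have hB := mem_powerset.1 e.2.2
  have hsplit := card_filter_add_card_filter_not (s := Q.unres) (· ≤ e.1.1)
  simp only [not_le] at hsplit
  have := card_le_card hB
  rw [unres_addFirstCol, card_sdiff_of_subset (hB.trans (filter_subset _ _)),
    card_sdiff_of_subset hB]
  simp only [unresBelow] at this ⊢
  omega

/-- Each unrestricted row below the top `1` of the new column contributes `x + 1`: it either
stays unrestricted or becomes restricted. -/
theorem sum_extension_add (Q : TableauCode m) (x : ℕ) :
    ∑ e : Q.Extension, x ^ #(Q.addFirstCol e).unres + x ^ (#Q.unres + 1) =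
      x * (x + 1) ^ #Q.unres := by
  have hfiber : ∀ t : Q.unres, ∑ B : (Q.unresBelow t).powerset,
      x ^ #(Q.addFirstCol ⟨t, B⟩).unres =
        x ^ #{i ∈ Q.unres | i ≤ t.1} * (x + 1) ^ #(Q.unresBelow t) := fun t => by
    simp only [card_unres_addFirstCol, pow_add]
    rw [← mul_sum, sum_coe_sort (Q.unresBelow t).powerset fun B => x ^ #(Q.unresBelow t \ B),
      add_comm x 1, ← sum_pow_mul_eq_add_pow]
    refine congrArg _ (sum_congr rfl fun B hB => ?_)
    rw [one_pow, one_mul, card_sdiff_of_subset (mem_powerset.1 hB)]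
  rw [Fintype.sum_sigma, Fintype.sum_congr _ _ hfiber,
    sum_coe_sort Q.unres fun t => x ^ #{i ∈ Q.unres | i ≤ t} * (x + 1) ^ #(Q.unresBelow t)]
  exact sum_pow_card_le_mul_succ_pow_card_lt Q.unres x

noncomputable def genFun (m x : ℕ) : ℕ := ∑ Q : TableauCode m, x ^ #Q.unres

theorem genFun_one (x : ℕ) : genFun 1 x = x := by
  rw [genFun, Fintype.sum_unique]
  simp [default, oneRow, unres]

theorem genFun_add_two (m x : ℕ) : genFun (m + 2) x = x * genFun (m + 1) (x + 1) := by
  rw [genFun, ← (equivLastEdge m).symm.sum_comp, Fintype.sum_sum_type, Fintype.sum_sigma, genFun,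
    mul_sum, ← sum_add_distrib]
  refine sum_congr rfl fun Q _ => ?_
  rw [← sum_extension_add, add_comm]
  congr 1
  simp [equivLastEdge, equivEmptyLastRow, unres_addEmptyRow, card_insert_of_notMem, mem_unres]

theorem genFun_eq_ascFactorial (m x : ℕ) : genFun (m + 1) x = x.ascFactorial (m + 1) := by
  induction m generalizing x with
  | zero => simp [genFun_one, Nat.ascFactorial_succ]
  | succ m ih =>
    rw [genFun_add_two, ih]
    exact (Nat.succ_ascFactorial x (m + 1)).trans Nat.ascFactorial_succ.symm

theorem card_eq_factorial (m : ℕ) : Fintype.card (TableauCode (m + 1)) = (m + 1)! := by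
  have := genFun_eq_ascFactorial m 1
  simp only [genFun, one_pow, sum_const, smul_eq_mul, mul_one, Nat.one_ascFactorial] at this
  exact this

theorem card_emptyLastRow (m : ℕ) :
    Fintype.card {P : TableauCode (m + 1) // P.shape.colLen 0 < P.rows} = m ! := by
  cases m with
  | zero =>
    refine Fintype.card_eq_one_iff.2 ⟨⟨oneRow, ?_⟩, fun P =>
      Subtype.ext (Subsingleton.elim (α := TableauCode 1) _ _)⟩
    simp [oneRow, colLen_bot]
  | succ m => rw [Fintype.card_congr (equivEmptyLastRow m), card_eq_factorial]

theorem sum_cornerCount_consCol (m : ℕ) :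
    ∑ D : TableauCode (m + 1), cornerCount (consCol D.rows D.shape) =
      ∑ D : TableauCode (m + 1), cornerCount D.shape + m ! := by
  rw [← card_emptyLastRow, Fintype.card_subtype, card_eq_sum_ones, sum_filter,
    ← sum_add_distrib]
  exact sum_congr rfl fun D _ => cornerCount_consCol D.colLen_le D.rows_pos

end TableauCode

/-- The total number of corners over all tree-like tableaux of size `n` equals the
total number of corners over all permutation tableaux of size `n` plus `(n - 1) !`. -/
theorem corners_treeLike_eq_permTableau (n : ℕ) (hn : 1 ≤ n) :
    (∑ᶠ T : TreeLike n, cornerCount T.shape) =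
      (∑ᶠ P : PermTableau n, cornerCount P.shape) + (n - 1) ! := by
  obtain ⟨m, rfl⟩ : ∃ m, n = m + 1 := ⟨n - 1, by omega⟩
  rw [← finsum_comp_equiv (TreeLike.equivCode _).symm,
    ← finsum_comp_equiv (PermTableau.equivCode _).symm, finsum_eq_sum_of_fintype,
    finsum_eq_sum_of_fintype]
  exact TableauCode.sum_cornerCount_consCol m
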